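/- Let τ be a nonzero measure on ℝ such that, with a' = inf Supp(τ), b' = sup Supp(τ): a' < b', τ((p,q)) < ∞ whenever a' < p < q < b', τ({a'}) = 0 if a' > -∞, and τ({b'}) = 0 if b' < ∞. Then there exist an interval (a,b) with -∞ ≤ a < b ≤ ∞ and a decreasing, left-continuous, non-constant function f on (a,b) with inf f < f(s) < sup f for all s, such that τ is the pushforward of Lebesgue measure on (a,b) under f. -/

import Mathlib

/-!
Put `I = (a', b')` and fix `c ∈ I`. The function `G x = τ (x, c] - τ (c, x]` is finite on `I`
(even when `τ` has infinite mass near an end of `I`), decreasing and right-continuous, and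
`τ (p, q] = G p - G q`. Its generalized inverse `f s = sup {x ∈ I | s ≤ G x}` on
`(inf G, sup G)` is decreasing and left-continuous, and `{s | f s ∈ (p, q]}` lies between
`(G q, G p)` and `[G q, G p]`; so `f` pushes Lebesgue measure to `τ` on these intervals, hence
everywhere, as `τ` lives on `I`. The support conditions say that `G` attains neither its infimum
nor its supremum on `I`, which is what gives `inf f < f s < sup f`.
-/

open MeasureTheory Set ENNReal Filter Topology

def realIoo (a b : EReal) : Set ℝ := (↑) ⁻¹' Ioo a b

lemma isOpen_realIoo (a b : EReal) : IsOpen (realIoo a b) :=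
  isOpen_Ioo.preimage continuous_coe_real_ereal

lemma ordConnected_realIoo (a b : EReal) : (realIoo a b).OrdConnected :=
  ordConnected_Ioo.preimage_mono fun _ _ => EReal.coe_le_coe

lemma nonempty_realIoo {a b : EReal} (h : a < b) : (realIoo a b).Nonempty :=
  EReal.exists_between_coe_real h

lemma AntitoneOn.measurable_of_eqOn_compl {J : Set ℝ} {f : ℝ → ℝ} (hf : AntitoneOn f J)
    (hJ : MeasurableSet J) (h0 : EqOn f 0 Jᶜ) : Measurable f := by
  refine measurable_of_restrict_of_restrict_compl hJ
    (Antitone.measurable fun x y hxy => hf x.2 y.2 hxy) ?_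
  rw [show Jᶜ.domRestrict f = 0 from funext fun x => h0 x.2]
  exact measurable_const

lemma MeasureTheory.Measure.map_restrict_apply {α β : Type*} [MeasurableSpace α]
    [MeasurableSpace β] {μ : Measure α} {J : Set α} {B : Set β} {f : α → β}
    (hf : Measurable f) (hB : MeasurableSet B) :
    (μ.restrict J).map f B = μ {s | s ∈ J ∧ f s ∈ B} := by
  rw [Measure.map_apply hf hB, Measure.restrict_apply (hf hB), inter_comm]
  rfl

lemma IsOpen.exists_rat_mem_Ioo {I : Set ℝ} (hI : IsOpen I) {t : ℝ} (ht : t ∈ I) :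
    ∃ p q : ℚ, (p : ℝ) ∈ I ∧ (q : ℝ) ∈ I ∧ t ∈ Ioo (p : ℝ) q := by
  obtain ⟨ε, hε, hball⟩ := Metric.isOpen_iff.1 hI t ht
  obtain ⟨p, hp⟩ := exists_rat_btwn (show t - ε < t by linarith)
  obtain ⟨q, hq⟩ := exists_rat_btwn (show t < t + ε by linarith)
  refine ⟨p, q, hball ?_, hball ?_, hp.2, hq.1⟩ <;>
    rw [Metric.mem_ball, Real.dist_eq, abs_lt] <;> constructor <;> linarith

theorem MeasureTheory.Measure.ext_of_Ioc_of_isOpen {μ ν : Measure ℝ} {I : Set ℝ}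
    (hI : IsOpen I) (hIc : I.OrdConnected) (hμ : μ Iᶜ = 0) (hν : ν Iᶜ = 0)
    (hfin : ∀ p ∈ I, ∀ q ∈ I, μ (Ioc p q) ≠ ∞)
    (h : ∀ p ∈ I, ∀ q ∈ I, μ (Ioc p q) = ν (Ioc p q)) : μ = ν := by
  let S := {pq : ℚ × ℚ // (pq.1 : ℝ) ∈ I ∧ (pq.2 : ℝ) ∈ I}
  have hcover : I = ⋃ i : S, Ioc (i.1.1 : ℝ) i.1.2 := by
    refine subset_antisymm (fun t ht => ?_) (iUnion_subset fun i => ?_)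
    · obtain ⟨p, q, hp, hq, hpt, htq⟩ := hI.exists_rat_mem_Ioo ht
      exact mem_iUnion.2 ⟨⟨(p, q), hp, hq⟩, hpt, htq.le⟩
    · exact Ioc_subset_Icc_self.trans (hIc.out i.2.1 i.2.2)
  rw [← restrict_eq_self_of_ae_mem (μ := μ) (ae_iff.2 hμ),
    ← restrict_eq_self_of_ae_mem (μ := ν) (ae_iff.2 hν), hcover, restrict_iUnion_congr]
  rintro ⟨⟨p, q⟩, hp, hq⟩
  have hends {a b : ℝ} (hle : a ⊔ p ≤ b ⊓ q) : a ⊔ (p : ℝ) ∈ I ∧ b ⊓ (q : ℝ) ∈ I :=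
    ⟨hIc.out hp hq ⟨le_sup_right, hle.trans inf_le_right⟩,
      hIc.out hp hq ⟨le_sup_right.trans hle, inf_le_right⟩⟩
  refine Measure.ext_of_Ioc' _ _ (fun a b _ => ?_) (fun a b _ => ?_) <;>
    simp only [Measure.restrict_apply measurableSet_Ioc, Ioc_inter_Ioc] <;>
    rcases le_or_gt (a ⊔ p) (b ⊓ q) with hle | hlt
  · exact hfin _ (hends hle).1 _ (hends hle).2
  · simp [Ioc_eq_empty hlt.not_gt]
  · exact h _ (hends hle).1 _ (hends hle).2
  · simp [Ioc_eq_empty hlt.not_gt]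

section GenInv

variable {I : Set ℝ} {G : ℝ → ℝ} {s x : ℝ}

noncomputable def rangeInf (G : ℝ → ℝ) (I : Set ℝ) : EReal :=
  sInf ((fun x => (G x : EReal)) '' I)

noncomputable def rangeSup (G : ℝ → ℝ) (I : Set ℝ) : EReal :=
  sSup ((fun x => (G x : EReal)) '' I)

def rangeIoo (G : ℝ → ℝ) (I : Set ℝ) : Set ℝ := realIoo (rangeInf G I) (rangeSup G I)

/-- Outside `rangeIoo G I` the supremum is a junk value; the indicator replaces it by `0`,
which makes `genInv G I` measurable. -/
noncomputable def genInv (G : ℝ → ℝ) (I : Set ℝ) : ℝ → ℝ :=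
  (rangeIoo G I).indicator fun s => sSup {x | x ∈ I ∧ s ≤ G x}

lemma rangeInf_le (hx : x ∈ I) : rangeInf G I ≤ G x := sInf_le (mem_image_of_mem _ hx)

lemma le_rangeSup (hx : x ∈ I) : (G x : EReal) ≤ rangeSup G I :=
  le_sSup (mem_image_of_mem _ hx)

lemma exists_lt_of_rangeInf_lt (h : rangeInf G I < s) : ∃ x ∈ I, G x < s := by
  obtain ⟨_, ⟨x, hx, rfl⟩, hxs⟩ := sInf_lt_iff.1 h
  exact ⟨x, hx, EReal.coe_lt_coe_iff.1 hxs⟩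

lemma exists_gt_of_lt_rangeSup (h : s < rangeSup G I) : ∃ x ∈ I, s < G x := by
  obtain ⟨_, ⟨x, hx, rfl⟩, hxs⟩ := lt_sSup_iff.1 h
  exact ⟨x, hx, EReal.coe_lt_coe_iff.1 hxs⟩

lemma rangeInf_lt_rangeSup (hGJ : MapsTo G I (rangeIoo G I)) (hx : x ∈ I) :
    rangeInf G I < rangeSup G I :=
  (hGJ hx).1.trans (hGJ hx).2

lemma le_genInv (hG : AntitoneOn G I) (hs : s ∈ rangeIoo G I) (hx : x ∈ I) (h : s ≤ G x) :
    x ≤ genInv G I s := by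
  obtain ⟨x₁, hx₁, hx₁s⟩ := exists_lt_of_rangeInf_lt hs.1
  rw [genInv, indicator_of_mem hs]
  refine le_csSup ⟨x₁, fun y hy => ?_⟩ ⟨hx, h⟩
  exact (hG.reflect_lt hx₁ hy.1 (hx₁s.trans_le hy.2)).le

lemma genInv_le (hG : AntitoneOn G I) (hs : s ∈ rangeIoo G I) (hx : x ∈ I) (h : G x < s) :
    genInv G I s ≤ x := by
  obtain ⟨x₀, hx₀, hsx₀⟩ := exists_gt_of_lt_rangeSup hs.2
  rw [genInv, indicator_of_mem hs]
  exact csSup_le ⟨x₀, hx₀, hsx₀.le⟩ fun y hy => (hG.reflect_lt hx hy.1 (h.trans_le hy.2)).le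

lemma lt_genInv (hI : IsOpen I) (hG : AntitoneOn G I)
    (hGr : ∀ x ∈ I, ContinuousWithinAt G (Ioi x) x) (hs : s ∈ rangeIoo G I) (hx : x ∈ I)
    (h : s < G x) : x < genInv G I s := by
  have hI' : ∀ᶠ y in 𝓝[>] x, y ∈ I := nhdsWithin_le_nhds (hI.mem_nhds hx)
  obtain ⟨y, hxy, hy, hsy⟩ :=
    (eventually_mem_nhdsWithin.and (hI'.and ((hGr x hx).eventually (lt_mem_nhds h)))).exists
  exact hxy.trans_le (le_genInv hG hs hy hsy.le)

lemma genInv_mem (hIc : I.OrdConnected) (hG : AntitoneOn G I) (hs : s ∈ rangeIoo G I) :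
    genInv G I s ∈ I := by
  obtain ⟨x₀, hx₀, hsx₀⟩ := exists_gt_of_lt_rangeSup hs.2
  obtain ⟨x₁, hx₁, hx₁s⟩ := exists_lt_of_rangeInf_lt hs.1
  exact hIc.out hx₀ hx₁ ⟨le_genInv hG hs hx₀ hsx₀.le, genInv_le hG hs hx₁ hx₁s⟩

lemma antitoneOn_genInv (hG : AntitoneOn G I) : AntitoneOn (genInv G I) (rangeIoo G I) := by
  intro s hs t ht hst
  obtain ⟨x₀, hx₀, htx₀⟩ := exists_gt_of_lt_rangeSup ht.2
  rw [genInv, indicator_of_mem ht]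
  exact csSup_le ⟨x₀, hx₀, htx₀.le⟩ fun y hy => le_genInv hG hs hy.1 (hst.trans hy.2)

lemma measurable_genInv (hG : AntitoneOn G I) : Measurable (genInv G I) :=
  (antitoneOn_genInv hG).measurable_of_eqOn_compl (isOpen_realIoo _ _).measurableSet
    fun _ hs => indicator_of_notMem hs _

lemma continuousWithinAt_genInv (hI : IsOpen I) (hIc : I.OrdConnected) (hG : AntitoneOn G I)
    (hs : s ∈ rangeIoo G I) :
    ContinuousWithinAt (genInv G I) (rangeIoo G I ∩ Iic s) s := by
  refine tendsto_order.2 ⟨fun u hu => ?_, fun u hu => ?_⟩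
  · filter_upwards [self_mem_nhdsWithin] with t ht
    exact hu.trans_le (antitoneOn_genInv hG ht.1 hs ht.2)
  · have hev : ∀ᶠ x in 𝓝 (genInv G I s), x ∈ I ∧ x < u :=
      Filter.Eventually.and (hI.mem_nhds (genInv_mem hIc hG hs)) (gt_mem_nhds hu)
    have hev' : ∀ᶠ x in 𝓝[>] genInv G I s, genInv G I s < x ∧ x ∈ I ∧ x < u :=
      eventually_mem_nhdsWithin.and (nhdsWithin_le_nhds hev)
    obtain ⟨x, hsx, hx, hxu⟩ := hev'.exists
    have hGx : G x < s := not_le.1 fun h => (le_genInv hG hs hx h).not_gt hsx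
    filter_upwards [self_mem_nhdsWithin, nhdsWithin_le_nhds (lt_mem_nhds hGx)] with t ht hxt
    exact (genInv_le hG ht.1 hx hxt).trans_lt hxu

lemma exists_genInv_lt (hG : AntitoneOn G I) (hGJ : MapsTo G I (rangeIoo G I)) (hx : x ∈ I) :
    ∃ t ∈ rangeIoo G I, genInv G I t < x := by
  obtain ⟨y, hy, hxy⟩ := exists_gt_of_lt_rangeSup (hGJ hx).2
  obtain ⟨t, hyt, htb⟩ := EReal.exists_between_coe_real (hGJ hy).2
  have ht : t ∈ rangeIoo G I := ⟨(hGJ hy).1.trans hyt, htb⟩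
  exact ⟨t, ht, (genInv_le hG ht hy (EReal.coe_lt_coe_iff.1 hyt)).trans_lt
    (hG.reflect_lt hx hy hxy)⟩

lemma exists_lt_genInv (hG : AntitoneOn G I) (hGJ : MapsTo G I (rangeIoo G I)) (hx : x ∈ I) :
    ∃ t ∈ rangeIoo G I, x < genInv G I t := by
  obtain ⟨y, hy, hyx⟩ := exists_lt_of_rangeInf_lt (hGJ hx).1
  obtain ⟨t, hat, hty⟩ := EReal.exists_between_coe_real (hGJ hy).1
  have ht : t ∈ rangeIoo G I := ⟨hat, hty.trans (hGJ hy).2⟩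
  exact ⟨t, ht, (hG.reflect_lt hy hx hyx).trans_le
    (le_genInv hG ht hy (EReal.coe_lt_coe_iff.1 hty).le)⟩

lemma volume_genInv_mem_Ioc (hI : IsOpen I) (hG : AntitoneOn G I)
    (hGr : ∀ x ∈ I, ContinuousWithinAt G (Ioi x) x) {p q : ℝ} (hp : p ∈ I) (hq : q ∈ I) :
    volume {s | s ∈ rangeIoo G I ∧ genInv G I s ∈ Ioc p q} = ENNReal.ofReal (G p - G q) := by
  have hsub : Ioo (G q) (G p) ⊆ {s | s ∈ rangeIoo G I ∧ genInv G I s ∈ Ioc p q} := by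
    intro s ⟨hqs, hsp⟩
    have hs : s ∈ rangeIoo G I := ⟨(rangeInf_le hq).trans_lt (EReal.coe_lt_coe_iff.2 hqs),
      (EReal.coe_lt_coe_iff.2 hsp).trans_le (le_rangeSup hp)⟩
    exact ⟨hs, lt_genInv hI hG hGr hs hp hsp, genInv_le hG hs hq hqs⟩
  have hsup : {s | s ∈ rangeIoo G I ∧ genInv G I s ∈ Ioc p q} ⊆ Icc (G q) (G p) := by
    rintro s ⟨hs, hps, hsq⟩
    exact ⟨not_lt.1 fun h => (lt_genInv hI hG hGr hs hq h).not_ge hsq,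
      not_lt.1 fun h => (genInv_le hG hs hp h).not_gt hps⟩
  refine le_antisymm ?_ ?_
  · simpa using measure_mono (μ := volume) hsup
  · simpa using measure_mono (μ := volume) hsub

end GenInv

section AntiCdf

variable {τ : Measure ℝ} {I : Set ℝ} {c x y : ℝ}

noncomputable def antiCdf (τ : Measure ℝ) (c : ℝ) (x : ℝ) : ℝ :=
  (τ (Ioc x c)).toReal - (τ (Ioc c x)).toReal

lemma toReal_measure_Ioc_add {z : ℝ} (hxy : x ≤ y) (hyz : y ≤ z) (h₁ : τ (Ioc x y) ≠ ∞)
    (h₂ : τ (Ioc y z) ≠ ∞) :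
    (τ (Ioc x z)).toReal = (τ (Ioc x y)).toReal + (τ (Ioc y z)).toReal := by
  rw [← Ioc_union_Ioc_eq_Ioc hxy hyz, measure_union (Ioc_disjoint_Ioc_of_le le_rfl)
    measurableSet_Ioc, ENNReal.toReal_add h₁ h₂]

lemma antiCdf_sub_antiCdf (hfin : ∀ x ∈ I, ∀ y ∈ I, τ (Ioc x y) ≠ ∞) (hc : c ∈ I)
    (hx : x ∈ I) (hy : y ∈ I) (hxy : x ≤ y) :
    antiCdf τ c x - antiCdf τ c y = (τ (Ioc x y)).toReal := by
  unfold antiCdf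
  rcases le_total y c with hyc | hcy
  · rw [Ioc_eq_empty (hxy.trans hyc).not_gt, Ioc_eq_empty hyc.not_gt,
      toReal_measure_Ioc_add hxy hyc (hfin x hx y hy) (hfin y hy c hc)]
    simp
  rcases le_total x c with hxc | hcx
  · rw [Ioc_eq_empty hxc.not_gt, Ioc_eq_empty hcy.not_gt,
      toReal_measure_Ioc_add hxc hcy (hfin x hx c hc) (hfin c hc y hy)]
    simp
  · rw [Ioc_eq_empty hcx.not_gt, Ioc_eq_empty hcy.not_gt,
      toReal_measure_Ioc_add hcx hxy (hfin c hc x hx) (hfin x hx y hy)]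
    simp

lemma antitoneOn_antiCdf (hfin : ∀ x ∈ I, ∀ y ∈ I, τ (Ioc x y) ≠ ∞) (hc : c ∈ I) :
    AntitoneOn (antiCdf τ c) I := fun _ hx _ hy hxy =>
  sub_nonneg.1 ((antiCdf_sub_antiCdf hfin hc hx hy hxy).ge.trans' ENNReal.toReal_nonneg)

lemma measure_Ioc_eq_ofReal_antiCdf (hfin : ∀ x ∈ I, ∀ y ∈ I, τ (Ioc x y) ≠ ∞) (hc : c ∈ I)
    (hx : x ∈ I) (hy : y ∈ I) :
    τ (Ioc x y) = ENNReal.ofReal (antiCdf τ c x - antiCdf τ c y) := by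
  rcases le_total x y with hxy | hyx
  · rw [antiCdf_sub_antiCdf hfin hc hx hy hxy, ENNReal.ofReal_toReal (hfin x hx y hy)]
  · rw [Ioc_eq_empty hyx.not_gt, measure_empty, eq_comm, ENNReal.ofReal_eq_zero, sub_nonpos]
    exact antitoneOn_antiCdf hfin hc hy hx hyx

lemma continuousWithinAt_antiCdf (hI : IsOpen I) (hfin : ∀ x ∈ I, ∀ y ∈ I, τ (Ioc x y) ≠ ∞)
    (hc : c ∈ I) (hx : x ∈ I) : ContinuousWithinAt (antiCdf τ c) (Ioi x) x := by
  have hI' : ∀ᶠ y in 𝓝[>] x, x < y ∧ y ∈ I :=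
    eventually_mem_nhdsWithin.and (nhdsWithin_le_nhds (hI.mem_nhds hx))
  have hlim : Tendsto (fun y => τ (Ioc x y)) (𝓝[>] x) (𝓝 0) := by
    obtain ⟨r, hxr, hr⟩ := hI'.exists
    have := tendsto_measure_biInter_gt (μ := τ) (s := Ioc x) (a := x)
      (fun _ _ => measurableSet_Ioc.nullMeasurableSet)
      (fun _ _ _ hij => Ioc_subset_Ioc_right hij) ⟨r, hxr, hfin x hx r hr⟩
    have hempty : ⋂ r > x, Ioc x r = ∅ := eq_empty_of_forall_notMem fun t ht => by
      simp only [mem_iInter₂, mem_Ioc] at ht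
      exact (ht (x + 1) (by linarith)).1.not_ge
        (le_of_forall_gt_imp_ge_of_dense fun r hr => (ht r hr).2)
    rwa [hempty, measure_empty] at this
  have hsub : Tendsto (fun y => antiCdf τ c x - (τ (Ioc x y)).toReal) (𝓝[>] x)
      (𝓝 (antiCdf τ c x)) := by
    simpa using tendsto_const_nhds.sub ((ENNReal.tendsto_toReal zero_ne_top).comp hlim)
  refine hsub.congr' ?_
  filter_upwards [hI'] with y ⟨hxy, hy⟩
  rw [← antiCdf_sub_antiCdf hfin hc hx hy hxy.le]; ring

lemma antiCdf_lt_antiCdf (hfin : ∀ x ∈ I, ∀ y ∈ I, τ (Ioc x y) ≠ ∞) (hc : c ∈ I)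
    (hx : x ∈ I) (hy : y ∈ I) (hxy : x ≤ y) (hne : τ (Ioc x y) ≠ 0) :
    antiCdf τ c y < antiCdf τ c x :=
  sub_pos.1 <| (antiCdf_sub_antiCdf hfin hc hx hy hxy).symm ▸
    ENNReal.toReal_pos hne (hfin x hx y hy)

lemma exists_measure_Ioc_ne_zero_of_Ioi (hI : IsOpen I) (hτI : τ Iᶜ = 0)
    (h : τ (Ioi x) ≠ 0) : ∃ y ∈ I, x < y ∧ τ (Ioc x y) ≠ 0 := by
  by_contra! hzero
  refine h (measure_mono_null (t := Iᶜ ∪ ⋃ (q : ℚ) (_ : (q : ℝ) ∈ I ∧ x < q), Ioc x q)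
    (fun t ht => ?_) (measure_union_null hτI (measure_iUnion_null fun q =>
      measure_iUnion_null fun hq => hzero q hq.1 hq.2)))
  by_cases htI : t ∈ I
  · obtain ⟨-, q, -, hq, -, htq⟩ := hI.exists_rat_mem_Ioo htI
    exact Or.inr (mem_iUnion₂.2 ⟨q, ⟨hq, ht.trans htq⟩, ht, htq.le⟩)
  · exact Or.inl htI

lemma exists_measure_Ioc_ne_zero_of_Iio (hI : IsOpen I) (hτI : τ Iᶜ = 0)
    (h : τ (Iio x) ≠ 0) : ∃ y ∈ I, y < x ∧ τ (Ioc y x) ≠ 0 := by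
  by_contra! hzero
  refine h (measure_mono_null
    (t := Iᶜ ∪ ⋃ (p : ℚ) (_ : (p : ℝ) ∈ I ∧ (p : ℝ) < x), Ioc (p : ℝ) x)
    (fun t ht => ?_) (measure_union_null hτI (measure_iUnion_null fun p =>
      measure_iUnion_null fun hp => hzero p hp.1 hp.2)))
  by_cases htI : t ∈ I
  · obtain ⟨p, -, hp, -, hpt, -⟩ := hI.exists_rat_mem_Ioo htI
    exact Or.inr (mem_iUnion₂.2 ⟨p, ⟨hp, hpt.trans ht⟩, hpt, ht.le⟩)
  · exact Or.inl htI

lemma mapsTo_antiCdf (hI : IsOpen I) (hτI : τ Iᶜ = 0)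
    (hfin : ∀ x ∈ I, ∀ y ∈ I, τ (Ioc x y) ≠ ∞) (hc : c ∈ I) (hIoi : ∀ x ∈ I, τ (Ioi x) ≠ 0)
    (hIio : ∀ x ∈ I, τ (Iio x) ≠ 0) :
    MapsTo (antiCdf τ c) I (rangeIoo (antiCdf τ c) I) := by
  intro x hx
  obtain ⟨y, hy, hxy, hy0⟩ := exists_measure_Ioc_ne_zero_of_Ioi hI hτI (hIoi x hx)
  obtain ⟨z, hz, hzx, hz0⟩ := exists_measure_Ioc_ne_zero_of_Iio hI hτI (hIio x hx)
  exact ⟨(rangeInf_le hy).trans_lt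
      (EReal.coe_lt_coe_iff.2 (antiCdf_lt_antiCdf hfin hc hx hy hxy.le hy0)),
    (EReal.coe_lt_coe_iff.2 (antiCdf_lt_antiCdf hfin hc hz hx hzx.le hz0)).trans_le
      (le_rangeSup hz)⟩

theorem map_genInv_antiCdf (hI : IsOpen I) (hIc : I.OrdConnected) (hτI : τ Iᶜ = 0)
    (hfin : ∀ x ∈ I, ∀ y ∈ I, τ (Ioc x y) ≠ ∞) (hc : c ∈ I) :
    (volume.restrict (rangeIoo (antiCdf τ c) I)).map (genInv (antiCdf τ c) I) = τ := by
  have hG := antitoneOn_antiCdf hfin hc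
  have hGr : ∀ x ∈ I, ContinuousWithinAt (antiCdf τ c) (Ioi x) x :=
    fun x hx => continuousWithinAt_antiCdf hI hfin hc hx
  have hf := measurable_genInv hG
  refine (Measure.ext_of_Ioc_of_isOpen hI hIc hτI ?_ hfin fun p hp q hq => ?_).symm
  · rw [Measure.map_restrict_apply hf hI.measurableSet.compl]
    exact measure_mono_null (fun s hs => hs.2 (genInv_mem hIc hG hs.1)) measure_empty
  · rw [Measure.map_restrict_apply hf measurableSet_Ioc,
      volume_genInv_mem_Ioc hI hG hGr hp hq, measure_Ioc_eq_ofReal_antiCdf hfin hc hp hq]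

end AntiCdf

section Support

variable {τ : Measure ℝ}

lemma mem_support_iff_forall_isOpen {u : ℝ} :
    u ∈ τ.support ↔ ∀ U : Set ℝ, IsOpen U → u ∈ U → τ U ≠ 0 := by
  simp only [Measure.support_eq_forall_isOpen, mem_ofPred_eq, pos_iff_ne_zero]
  exact forall_congr' fun _ => forall_comm

lemma setOf_coe_mem_support :
    {x : EReal | ∃ u : ℝ, (∀ U : Set ℝ, IsOpen U → u ∈ U → τ U ≠ 0) ∧ x = (u : EReal)} =
      (↑) '' τ.support := by
  ext x
  simp [mem_support_iff_forall_isOpen, eq_comm]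

lemma measure_Ioi_ne_zero_of_lt_sSup {x : ℝ} (hx : (x : EReal) < sSup ((↑) '' τ.support)) :
    τ (Ioi x) ≠ 0 := by
  obtain ⟨_, ⟨u, hu, rfl⟩, hxu⟩ := lt_sSup_iff.1 hx
  exact ((Measure.mem_support_iff_forall u).1 hu _
    (Ioi_mem_nhds (EReal.coe_lt_coe_iff.1 hxu))).ne'

lemma measure_Iio_ne_zero_of_sInf_lt {x : ℝ} (hx : sInf ((↑) '' τ.support) < (x : EReal)) :
    τ (Iio x) ≠ 0 := by
  obtain ⟨_, ⟨u, hu, rfl⟩, hux⟩ := sInf_lt_iff.1 hx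
  exact ((Measure.mem_support_iff_forall u).1 hu _
    (Iio_mem_nhds (EReal.coe_lt_coe_iff.1 hux))).ne'

lemma measure_setOf_coe_eq_zero {e : EReal} (h : ∀ u : ℝ, e = u → τ {u} = 0) :
    τ {u : ℝ | (u : EReal) = e} = 0 := by
  rcases eq_empty_or_nonempty {u : ℝ | (u : EReal) = e} with he | ⟨u, rfl⟩
  · rw [he, measure_empty]
  · simpa using h u rfl

lemma measure_compl_realIoo_eq_zero {a b : EReal} (ha : a = sInf ((↑) '' τ.support))
    (hb : b = sSup ((↑) '' τ.support)) (ha₀ : ∀ u : ℝ, a = u → τ {u} = 0)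
    (hb₀ : ∀ u : ℝ, b = u → τ {u} = 0) : τ (realIoo a b)ᶜ = 0 := by
  refine measure_mono_null (t := τ.supportᶜ ∪ ({u | (u : EReal) = a} ∪ {u | (u : EReal) = b}))
    (fun t ht => ?_) (measure_union_null Measure.measure_compl_support
      (measure_union_null (measure_setOf_coe_eq_zero ha₀) (measure_setOf_coe_eq_zero hb₀)))
  by_cases hts : t ∈ τ.support
  · have hat : a ≤ t := ha ▸ sInf_le (mem_image_of_mem _ hts)
    have htb : (t : EReal) ≤ b := hb ▸ le_sSup (mem_image_of_mem _ hts)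
    rcases hat.lt_or_eq with hat | hat
    · exact Or.inr (Or.inr (htb.antisymm (not_lt.1 fun htb => ht ⟨hat, htb⟩)))
    · exact Or.inr (Or.inl hat.symm)
  · exact Or.inl hts

lemma measure_Ioc_ne_top_of_Ioo {a b : EReal}
    (h : ∀ p q : ℝ, a < (p : EReal) → p < q → (q : EReal) < b → τ (Ioo p q) < ⊤) :
    ∀ x ∈ realIoo a b, ∀ y ∈ realIoo a b, τ (Ioc x y) ≠ ∞ := by
  intro x hx y hy
  rcases le_or_gt y x with hyx | hxy
  · simp [Ioc_eq_empty hyx.not_gt]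
  obtain ⟨q, hyq, hqb⟩ := EReal.exists_between_coe_real hy.2
  have hyq := EReal.coe_lt_coe_iff.1 hyq
  exact ne_top_of_le_ne_top (h x q hx.1 (hxy.trans hyq) hqb).ne
    (measure_mono (Ioc_subset_Ioo_right hyq))

end Support

theorem stmt_14_general (τ : Measure ℝ)
    (a' b' : EReal)
    (ha' : a' = sInf {x : EReal | ∃ u : ℝ,
      (∀ U : Set ℝ, IsOpen U → u ∈ U → τ U ≠ 0) ∧ x = (u : EReal)})
    (hb' : b' = sSup {x : EReal | ∃ u : ℝ,
      (∀ U : Set ℝ, IsOpen U → u ∈ U → τ U ≠ 0) ∧ x = (u : EReal)})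
    (h1 : a' < b')
    (h2 : ∀ p q : ℝ, a' < (p : EReal) → p < q → (q : EReal) < b' → τ (Ioo p q) < ⊤)
    (h3 : ∀ u : ℝ, a' = (u : EReal) → τ {u} = 0)
    (h4 : ∀ u : ℝ, b' = (u : EReal) → τ {u} = 0) :
    ∃ (a b : EReal) (f : ℝ → ℝ), a < b ∧ Measurable f ∧
      AntitoneOn f {s : ℝ | a < (s : EReal) ∧ (s : EReal) < b} ∧
      (∀ s : ℝ, a < (s : EReal) → (s : EReal) < b →
        ContinuousWithinAt f ({s : ℝ | a < (s : EReal) ∧ (s : EReal) < b} ∩ Iic s) s) ∧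
      (∃ s t : ℝ, (a < (s : EReal) ∧ (s : EReal) < b) ∧
        (a < (t : EReal) ∧ (t : EReal) < b) ∧ f s ≠ f t) ∧
      (∀ s : ℝ, a < (s : EReal) → (s : EReal) < b →
        sInf {x : EReal | ∃ t : ℝ, (a < (t : EReal) ∧ (t : EReal) < b) ∧ x = (f t : EReal)}
          < (f s : EReal) ∧
        (f s : EReal) <
          sSup {x : EReal | ∃ t : ℝ,
            (a < (t : EReal) ∧ (t : EReal) < b) ∧ x = (f t : EReal)}) ∧
      (∀ B : Set ℝ, MeasurableSet B →
        τ B = volume {s : ℝ | (a < (s : EReal) ∧ (s : EReal) < b) ∧ f s ∈ B}) := by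
  rw [setOf_coe_mem_support] at ha' hb'
  obtain ⟨c, hc⟩ := nonempty_realIoo h1
  have hI := isOpen_realIoo a' b'
  have hIc := ordConnected_realIoo a' b'
  have hfin := measure_Ioc_ne_top_of_Ioo h2
  have hτI := measure_compl_realIoo_eq_zero ha' hb' h3 h4
  have hG := antitoneOn_antiCdf hfin hc
  have hGJ := mapsTo_antiCdf hI hτI hfin hc
    (fun x hx => measure_Ioi_ne_zero_of_lt_sSup (hb' ▸ hx.2))
    (fun x hx => measure_Iio_ne_zero_of_sInf_lt (ha' ▸ hx.1))
  have hmem {s : ℝ} (hs : s ∈ rangeIoo (antiCdf τ c) (realIoo a' b')) := genInv_mem hIc hG hs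
  refine ⟨_, _, _, rangeInf_lt_rangeSup hGJ hc, measurable_genInv hG, antitoneOn_genInv hG,
    fun s hsa hsb => continuousWithinAt_genInv hI hIc hG ⟨hsa, hsb⟩, ?_, ?_, ?_⟩
  · obtain ⟨t, ht, hlt⟩ := exists_genInv_lt hG hGJ (hmem (hGJ hc))
    exact ⟨_, t, hGJ hc, ht, hlt.ne'⟩
  · intro s hsa hsb
    obtain ⟨t, ht, hlt⟩ := exists_genInv_lt hG hGJ (hmem ⟨hsa, hsb⟩)
    obtain ⟨t', ht', hgt⟩ := exists_lt_genInv hG hGJ (hmem ⟨hsa, hsb⟩)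
    exact ⟨sInf_lt_iff.2 ⟨_, ⟨t, ht, rfl⟩, EReal.coe_lt_coe_iff.2 hlt⟩,
      lt_sSup_iff.2 ⟨_, ⟨t', ht', rfl⟩, EReal.coe_lt_coe_iff.2 hgt⟩⟩
  · intro B hB
    conv_lhs => rw [← map_genInv_antiCdf hI hIc hτI hfin hc]
    exact Measure.map_restrict_apply (measurable_genInv hG) hB

/-- Every measure `τ` on `ℝ` satisfying Condition (B) is the `τ`-measure of some
function `f` on an interval `(a,b)` satisfying Condition (A). -/
theorem stmt_14 (τ : Measure ℝ) (hτ0 : τ ≠ 0)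
    (a' b' : EReal)
    (ha' : a' = sInf {x : EReal | ∃ u : ℝ,
      (∀ U : Set ℝ, IsOpen U → u ∈ U → τ U ≠ 0) ∧ x = (u : EReal)})
    (hb' : b' = sSup {x : EReal | ∃ u : ℝ,
      (∀ U : Set ℝ, IsOpen U → u ∈ U → τ U ≠ 0) ∧ x = (u : EReal)})
    (h1 : a' < b')
    (h2 : ∀ p q : ℝ, a' < (p : EReal) → p < q → (q : EReal) < b' → τ (Ioo p q) < ⊤)
    (h3 : ∀ u : ℝ, a' = (u : EReal) → τ {u} = 0)
    (h4 : ∀ u : ℝ, b' = (u : EReal) → τ {u} = 0) :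
    ∃ (a b : EReal) (f : ℝ → ℝ), a < b ∧ Measurable f ∧
      AntitoneOn f {s : ℝ | a < (s : EReal) ∧ (s : EReal) < b} ∧
      (∀ s : ℝ, a < (s : EReal) → (s : EReal) < b →
        ContinuousWithinAt f ({s : ℝ | a < (s : EReal) ∧ (s : EReal) < b} ∩ Iic s) s) ∧
      (∃ s t : ℝ, (a < (s : EReal) ∧ (s : EReal) < b) ∧
        (a < (t : EReal) ∧ (t : EReal) < b) ∧ f s ≠ f t) ∧
      (∀ s : ℝ, a < (s : EReal) → (s : EReal) < b →
        sInf {x : EReal | ∃ t : ℝ, (a < (t : EReal) ∧ (t : EReal) < b) ∧ x = (f t : EReal)}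
          < (f s : EReal) ∧
        (f s : EReal) <
          sSup {x : EReal | ∃ t : ℝ,
            (a < (t : EReal) ∧ (t : EReal) < b) ∧ x = (f t : EReal)}) ∧
      (∀ B : Set ℝ, MeasurableSet B →
        τ B = volume {s : ℝ | (a < (s : EReal) ∧ (s : EReal) < b) ∧ f s ∈ B}) :=
  stmt_14_general τ a' b' ha' hb' h1 h2 h3 h4
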